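/- Let P ∈ ℝ^d, n ≥ 1, m > 0, k⋆ = (1/n)(|P| − c(n,P)) P/|P| with c(n,P) as above, and let H₀⁽ˡ⁾(P;k₁,…,k_ℓ) = ½(P − Σⱼkⱼ)² + Σⱼ ω(kⱼ) with ω(k) = sqrt(m²+|k|²). Then for all 1 ≤ ℓ ≤ n: H₀⁽ⁿ⁾(P;k⋆,…,k⋆) − H₀⁽ˡ⁾(P;k⋆,…,k⋆) = (1 − ℓ/n)·( ½ ℓ n |k⋆|² − α(n,P) ), where α(n,P) := ½P² − H₀⁽ⁿ⁾(P;k⋆,…,k⋆). -/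
import Mathlib


/-- Algebraic identity (Step 3 of the Mourre estimate for the Nelson model):
with `k⋆ = (1/n)(|P| − c(n,P)) P/|P|` and
`H₀⁽ˡ⁾(P;k⋆,…,k⋆) = ½|P − ℓk⋆|² + ℓ·sqrt(m²+|k⋆|²)`, for all `1 ≤ ℓ ≤ n`,
`H₀⁽ⁿ⁾(P;k⋆,…,k⋆) − H₀⁽ˡ⁾(P;k⋆,…,k⋆) = (1 − ℓ/n)(½ℓn|k⋆|² − α(n,P))` where
`α(n,P) = ½|P|² − H₀⁽ⁿ⁾(P;k⋆,…,k⋆)`. -/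
theorem symbol_difference_identity
    (d : ℕ) (m : ℝ) (hm : 0 < m) (n ℓ : ℕ) (hn : 1 ≤ n) (hℓ1 : 1 ≤ ℓ) (hℓn : ℓ ≤ n)
    (P : EuclideanSpace ℝ (Fin d)) (hP : P ≠ 0)
    (c : ℝ) (hc : c ∈ Set.Ico (0 : ℝ) 1)
    (hceq : c = (‖P‖ - c) / Real.sqrt (m ^ 2 * (n : ℝ) ^ 2 + (‖P‖ - c) ^ 2))
    (kstar : EuclideanSpace ℝ (Fin d))
    (hkstar : kstar = ((‖P‖ - c) / (n : ℝ)) • (‖P‖⁻¹ • P))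
    (H : ℕ → ℝ)
    (hH : ∀ l : ℕ, H l =
      ‖P - (l : ℝ) • kstar‖ ^ 2 / 2 + (l : ℝ) * Real.sqrt (m ^ 2 + ‖kstar‖ ^ 2))
    (α : ℝ) (hα : α = ‖P‖ ^ 2 / 2 - H n) :
    H n - H ℓ
      = (1 - (ℓ : ℝ) / (n : ℝ)) * ((ℓ : ℝ) * (n : ℝ) * ‖kstar‖ ^ 2 / 2 - α) := by
  have hPn : ‖P‖ ≠ 0 := norm_ne_zero_iff.mpr hP
  have hn' : (n : ℝ) ≠ 0 := by exact_mod_cast Nat.one_le_iff_ne_zero.mp hn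
  set a : ℝ := (‖P‖ - c) / (n : ℝ) with ha
  have hk2 : ‖kstar‖ ^ 2 = a ^ 2 := by
    rw [hkstar, norm_smul, norm_smul, norm_inv, norm_norm, mul_pow, mul_pow,
      Real.norm_eq_abs, sq_abs, inv_pow, inv_mul_cancel₀ (pow_ne_zero 2 hPn), mul_one]
  have hPl : ∀ l : ℕ, ‖P - (l : ℝ) • kstar‖ ^ 2 = (‖P‖ - (l : ℝ) * a) ^ 2 := by
    intro l
    have h1 : P - (l : ℝ) • kstar = (1 - (l : ℝ) * a * ‖P‖⁻¹) • P := by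
      rw [hkstar, smul_smul, smul_smul, sub_smul, one_smul]
    rw [h1, norm_smul, mul_pow, Real.norm_eq_abs, sq_abs]
    field_simp
  set ω : ℝ := Real.sqrt (m ^ 2 + ‖kstar‖ ^ 2)
  rw [hα, hH n, hH ℓ, hk2, hPl n, hPl ℓ]
  field_simp
  ring
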